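/- arXiv:1612.05201 — 2 statements merged into one kernel-verified Lean document; each statement's English description precedes it below -/
import Mathlib

section
/- Let L be an n×n Laplacian matrix, let v ∈ ℝⁿ have nonnegative entries with s = Σᵢ vᵢ, let δ > 0, and let y⁰ ∈ ℝ^{n+1}. Then exp(−t(L₀ + H_{δ,v}))·y⁰ converges as t → ∞ to the constant vector c·1′, where c = (1/(s+δ))·( Σ_{j=1}^n [vᵀ(I + δ⁻¹L)⁻¹]_j · y⁰_j + δ·y⁰_{n+1} ). (Consensus in the system ẏ = −(L₀ + H_{δ,v})y with a hub uniformly influencing the agents.) -/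
open Matrix Filter Topology

/-- The index of a square real matrix: the smallest `k` with
`rank (A^(k+1)) = rank (A^k)`. -/
noncomputable def matIndex {m : Type*} [Fintype m] [DecidableEq m]
    (A : Matrix m m ℝ) : ℕ :=
  sInf {k : ℕ | (A ^ (k + 1)).rank = (A ^ k).rank}

/-- `Q` is the eigenprojection of `A` corresponding to the eigenvalue `0`:
an idempotent matrix whose range is the null space of `A ^ ind A` and whose
null space is the range of `A ^ ind A`. -/
def IsEigenprojection {m : Type*} [Fintype m] [DecidableEq m]
    (A Q : Matrix m m ℝ) : Prop :=
  Q * Q = Q ∧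
  LinearMap.range Q.mulVecLin = LinearMap.ker (A ^ matIndex A).mulVecLin ∧
  LinearMap.ker Q.mulVecLin = LinearMap.range (A ^ matIndex A).mulVecLin

/-- A Laplacian matrix: nonpositive off-diagonal entries and zero row sums. -/
def IsLaplacian {m : Type*} [Fintype m] (L : Matrix m m ℝ) : Prop :=
  (∀ i j, i ≠ j → L i j ≤ 0) ∧ ∀ i, ∑ j, L i j = 0

/-- The block matrix `L₀ = [[L, 0], [0ᵀ, 0]]`. -/
def hubL0 {n : ℕ} (L : Matrix (Fin n) (Fin n) ℝ) :
    Matrix (Fin n ⊕ Unit) (Fin n ⊕ Unit) ℝ :=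
  Matrix.fromBlocks L 0 0 0

/-- The block matrix `H_I = [[I, -1], [0ᵀ, 0]]`. -/
def hubHI (n : ℕ) : Matrix (Fin n ⊕ Unit) (Fin n ⊕ Unit) ℝ :=
  Matrix.fromBlocks 1 (Matrix.of fun _ _ => (-1 : ℝ)) 0 0

/-- The block matrix `H_v = [[0, 0], [-vᵀ, s]]` where `s = Σᵢ vᵢ`. -/
def hubHv {n : ℕ} (v : Fin n → ℝ) : Matrix (Fin n ⊕ Unit) (Fin n ⊕ Unit) ℝ :=
  Matrix.fromBlocks 0 0 (Matrix.of fun _ j => -v j) (Matrix.of fun _ _ => ∑ i, v i)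

/-- `H_{δ,v} = δ·H_I + H_v`. -/
def hubH {n : ℕ} (δ : ℝ) (v : Fin n → ℝ) :
    Matrix (Fin n ⊕ Unit) (Fin n ⊕ Unit) ℝ :=
  δ • hubHI n + hubHv v

/-!
Write `M = L₀ + H_{δ,v}`. It is again a Laplacian; its kernel is spanned by `1′`, because
`L + δI` is strictly diagonally dominant and hence invertible; and
`w = (vᵀ(I + δ⁻¹L)⁻¹, δ) / (s + δ)` satisfies `wᵀM = 0`, `wᵀ1′ = 1`.

For any Laplacian, Gershgorin's theorem puts every eigenvalue other than `0` in the open right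
half-plane. Decompose `y⁰` (over `ℂ`) into generalized eigenvectors. For `μ ≠ 0`,
`exp(-tM)` acts on the generalized eigenvector as `e^{-tμ}` times a polynomial in `t`, so it
decays, and `wᵀ` annihilates it. For `μ = 0`, the existence of `w` forces the generalized
eigenspace to be `ker M = ℝ1′`, on which `exp(-tM)` is the identity. Hence
`exp(-tM)y⁰ → (wᵀy⁰)1′`.
-/

open Finset

theorem Complex.re_pos_of_norm_sub_ofReal_le {μ : ℂ} {r : ℝ} (h : ‖μ - r‖ ≤ r) (hμ : μ ≠ 0) :
    0 < μ.re := by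
  have hr : 0 ≤ r := (norm_nonneg _).trans h
  have hsq : ‖μ - r‖ ^ 2 ≤ r ^ 2 := pow_le_pow_left₀ (norm_nonneg _) h 2
  have hμ2 : 0 < ‖μ‖ ^ 2 := by positivity
  rw [Complex.sq_norm, Complex.normSq_apply] at hsq hμ2
  simp only [Complex.sub_re, Complex.sub_im, Complex.ofReal_re, Complex.ofReal_im, sub_zero] at hsq
  nlinarith

namespace Matrix

variable {K : Type*}

theorem smul_one_add_inv_smul [DecidableEq K] {R : Type*} [Field R] (A : Matrix K K R) {c : R}
    (hc : c ≠ 0) : c • (1 + c⁻¹ • A) = A + c • 1 := by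
  rw [smul_add, smul_smul, mul_inv_cancel₀ hc, one_smul, add_comm]

variable [Fintype K]

theorem exists_const_of_map_ofReal_mulVec_eq_zero {A : Matrix K K ℝ}
    (hker : ∀ z, A *ᵥ z = 0 → ∃ c, z = fun _ => c) {z : K → ℂ}
    (hz : A.map (↑) *ᵥ z = 0) : ∃ c : ℂ, z = fun _ => c := by
  have hre : A *ᵥ (fun j => (z j).re) = 0 := by
    ext i
    simpa [mulVec, dotProduct, Complex.re_sum] using congrArg Complex.re (congrFun hz i)
  have him : A *ᵥ (fun j => (z j).im) = 0 := by
    ext i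
    simpa [mulVec, dotProduct, Complex.im_sum] using congrArg Complex.im (congrFun hz i)
  obtain ⟨a, ha⟩ := hker _ hre
  obtain ⟨b, hb⟩ := hker _ him
  exact ⟨⟨a, b⟩, funext fun j => Complex.ext (congrFun ha j) (congrFun hb j)⟩

variable [DecidableEq K]

section KernelAndLeftNullVector

variable {R : Type*} [CommRing R] {A : Matrix K K R} {w : K → R}

theorem mulVec_eq_zero_of_pow_mulVec_eq_zero (hw : w ᵥ* A = 0)
    (hker : ∀ z, A *ᵥ z = 0 → z = fun _ => w ⬝ᵥ z) {k : ℕ} {z : K → R}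
    (hz : A ^ k *ᵥ z = 0) : A *ᵥ z = 0 := by
  induction k generalizing z with
  | zero => rw [pow_zero, one_mulVec] at hz; rw [hz, mulVec_zero]
  | succ k ih =>
    have hAz : A *ᵥ (A *ᵥ z) = 0 := ih (by rwa [mulVec_mulVec, ← pow_succ])
    rw [hker _ hAz, dotProduct_mulVec, hw, zero_dotProduct]
    rfl

theorem vecMul_pow_sub_smul_one (hw : w ᵥ* A = 0) (μ : R) (k : ℕ) :
    w ᵥ* (A - μ • 1) ^ k = (-μ) ^ k • w := by
  induction k with
  | zero => simp
  | succ k ih =>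
    rw [pow_succ, ← vecMul_vecMul, ih, smul_vecMul, vecMul_sub, hw, vecMul_smul, vecMul_one,
      zero_sub, pow_succ, mul_smul, neg_smul]

theorem dotProduct_eq_zero_of_pow_sub_smul_mulVec_eq_zero [IsDomain R] (hw : w ᵥ* A = 0)
    {μ : R} (hμ : μ ≠ 0) {k : ℕ} {z : K → R} (hz : (A - μ • 1) ^ k *ᵥ z = 0) :
    w ⬝ᵥ z = 0 := by
  have h := congrArg (w ⬝ᵥ ·) hz
  simp only [dotProduct_mulVec, vecMul_pow_sub_smul_one hw, smul_dotProduct, dotProduct_zero,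
    smul_eq_mul] at h
  exact (mul_eq_zero.mp h).resolve_left (pow_ne_zero _ (neg_ne_zero.mpr hμ))

theorem exists_pow_mulVec_eq_zero_of_mem_maxGenEigenspace {μ : R} {z : K → R}
    (hz : z ∈ Module.End.maxGenEigenspace (toLin' A) μ) : ∃ k : ℕ, (A - μ • 1) ^ k *ᵥ z = 0 := by
  obtain ⟨k, hk⟩ := (Module.End.mem_maxGenEigenspace _ _ _).mp hz
  refine ⟨k, ?_⟩
  change ((toLinAlgEquiv' A - μ • 1) ^ k) z = 0 at hk
  rwa [← map_one (toLinAlgEquiv' (R := R) (n := K)), ← map_smul, ← map_sub, ← map_pow,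
    toLinAlgEquiv'_apply] at hk

end KernelAndLeftNullVector

open scoped Nat in
theorem exp_mulVec_eq_sum_of_pow_mulVec_eq_zero {𝕂 : Type*} [RCLike 𝕂] {C : Matrix K K 𝕂}
    {x : K → 𝕂} {d : ℕ} (h : C ^ d *ᵥ x = 0) :
    NormedSpace.exp C *ᵥ x = ∑ k ∈ range d, (k !⁻¹ : 𝕂) • (C ^ k *ᵥ x) := by
  open scoped Norms.Operator in
  have hsum := (NormedSpace.exp_series_hasSum_exp' (𝕂 := 𝕂) C).map
    (mulVec.addMonoidHomLeft x) (continuous_id.matrix_mulVec continuous_const)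
  refine hsum.unique (hasSum_sum_of_ne_finset_zero fun k hk => ?_) |>.trans
    (sum_congr rfl fun k _ => smul_mulVec _ _ _)
  obtain ⟨j, rfl⟩ := Nat.exists_eq_add_of_le' (not_lt.mp (mem_range.not.mp hk))
  simp [mulVec.addMonoidHomLeft, smul_mulVec, pow_add, ← mulVec_mulVec, h]

theorem exp_mulVec_of_mulVec_eq_zero {𝕂 : Type*} [RCLike 𝕂] {C : Matrix K K 𝕂}
    {x : K → 𝕂} (h : C *ᵥ x = 0) : NormedSpace.exp C *ᵥ x = x := by
  simp [exp_mulVec_eq_sum_of_pow_mulVec_eq_zero (d := 1) (by simpa using h)]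

theorem exp_smul_one (c : ℂ) : NormedSpace.exp (c • 1 : Matrix K K ℂ) = Complex.exp c • 1 := by
  open scoped Norms.Operator in
  rw [Complex.exp_eq_exp_ℂ, ← Algebra.algebraMap_eq_smul_one, ← Algebra.algebraMap_eq_smul_one,
    NormedSpace.algebraMap_exp_comm]
  rfl

theorem exp_map_ofReal (A : Matrix K K ℝ) :
    (NormedSpace.exp A).map (↑) = NormedSpace.exp (A.map ((↑) : ℝ → ℂ)) := by
  open scoped Norms.Operator in
  exact NormedSpace.map_exp (Complex.ofRealHom.mapMatrix (m := K))
    (continuous_id.matrix_map Complex.continuous_ofReal) A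

open scoped Nat in
theorem exp_neg_smul_mulVec_eq_sum {A : Matrix K K ℂ} {μ : ℂ} {d : ℕ} {x : K → ℂ}
    (hx : (A - μ • 1) ^ d *ᵥ x = 0) (t : ℝ) :
    NormedSpace.exp (-(t • A)) *ᵥ x = ∑ k ∈ range d,
      (Complex.exp (-(t * μ)) * (-(t : ℂ)) ^ k) • ((k !⁻¹ : ℂ) • ((A - μ • 1) ^ k *ᵥ x)) := by
  have hsplit : -(t • A) = (-(t * μ)) • (1 : Matrix K K ℂ) + (-(t : ℂ)) • (A - μ • 1) := by
    rw [← Complex.coe_smul]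
    module
  have hcomm : Commute ((-(t * μ)) • (1 : Matrix K K ℂ)) ((-(t : ℂ)) • (A - μ • 1)) :=
    ((Commute.one_left _).smul_left _).smul_right _
  have hnil : ((-(t : ℂ)) • (A - μ • 1)) ^ d *ᵥ x = 0 := by
    rw [smul_pow, smul_mulVec, hx, smul_zero]
  rw [hsplit, exp_add_of_commute _ _ hcomm, exp_smul_one, smul_mul, one_mul, smul_mulVec,
    exp_mulVec_eq_sum_of_pow_mulVec_eq_zero hnil, smul_sum]
  refine sum_congr rfl fun k _ => ?_
  rw [smul_pow, smul_mulVec, smul_comm _ ((-(t : ℂ)) ^ k), smul_smul]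

theorem tendsto_exp_neg_smul_mulVec_nhds_zero {A : Matrix K K ℂ} {μ : ℂ} (hμ : 0 < μ.re)
    {d : ℕ} {x : K → ℂ} (hx : (A - μ • 1) ^ d *ᵥ x = 0) :
    Tendsto (fun t : ℝ => NormedSpace.exp (-(t • A)) *ᵥ x) atTop (𝓝 0) := by
  have hcoef (k : ℕ) :
      Tendsto (fun t : ℝ => Complex.exp (-(t * μ)) * (-(t : ℂ)) ^ k) atTop (𝓝 0) := by
    rw [tendsto_zero_iff_norm_tendsto_zero]
    refine (tendsto_rpow_mul_exp_neg_mul_atTop_nhds_zero k μ.re hμ).congr' ?_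
    filter_upwards [eventually_ge_atTop 0] with t ht
    simp [Complex.norm_exp, abs_of_nonneg ht, mul_comm]
  simp_rw [exp_neg_smul_mulVec_eq_sum hx]
  simpa using tendsto_finsetSum (range d) fun k _ => (hcoef k).smul_const
    ((k.factorial⁻¹ : ℂ) • ((A - μ • 1) ^ k *ᵥ x))

theorem tendsto_exp_neg_smul_mulVec_of_re_pos {A : Matrix K K ℂ}
    (hspec : ∀ μ, Module.End.HasEigenvalue (toLin' A) μ → μ ≠ 0 → 0 < μ.re)
    {w : K → ℂ} (hw : w ᵥ* A = 0) (hker : ∀ z, A *ᵥ z = 0 → z = fun _ => w ⬝ᵥ z)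
    (x : K → ℂ) :
    Tendsto (fun t : ℝ => NormedSpace.exp (-(t • A)) *ᵥ x) atTop (𝓝 fun _ => w ⬝ᵥ x) := by
  have hx : x ∈ ⨆ μ, Module.End.maxGenEigenspace (toLin' A) μ :=
    Module.End.iSup_maxGenEigenspace_eq_top (toLin' A) ▸ Submodule.mem_top
  refine Submodule.iSup_induction _ (motive := fun x =>
    Tendsto (fun t : ℝ => NormedSpace.exp (-(t • A)) *ᵥ x) atTop (𝓝 fun _ => w ⬝ᵥ x))
    hx (fun μ z hz => ?_) (by simp only [mulVec_zero, dotProduct_zero]; exact tendsto_const_nhds)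
    (fun y z hy hz => by simp only [mulVec_add, dotProduct_add]; exact hy.add hz)
  obtain ⟨k, hk⟩ := exists_pow_mulVec_eq_zero_of_mem_maxGenEigenspace hz
  rcases eq_or_ne μ 0 with rfl | hμ
  · have hAz : A *ᵥ z = 0 :=
      mulVec_eq_zero_of_pow_mulVec_eq_zero hw hker (by simpa using hk)
    have hfix (t : ℝ) : NormedSpace.exp (-(t • A)) *ᵥ z = z :=
      exp_mulVec_of_mulVec_eq_zero (by rw [neg_mulVec, smul_mulVec, hAz, smul_zero, neg_zero])
    simp_rw [hfix, ← hker z hAz]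
    exact tendsto_const_nhds
  · rcases eq_or_ne z 0 with rfl | hz0
    · simp only [mulVec_zero, dotProduct_zero]; exact tendsto_const_nhds
    have hre : 0 < μ.re := hspec μ (Module.End.HasUnifEigenvalue.lt (k := ⊤) zero_lt_one
      ((Submodule.ne_bot_iff _).2 ⟨z, hz, hz0⟩)) hμ
    rw [dotProduct_eq_zero_of_pow_sub_smul_mulVec_eq_zero hw hμ hk]
    exact tendsto_exp_neg_smul_mulVec_nhds_zero hre hk

end Matrix

namespace IsLaplacian

variable {K : Type*} [Fintype K] {A : Matrix K K ℝ}

theorem mulVec_one (hA : IsLaplacian A) : A *ᵥ 1 = 0 := by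
  ext i
  simpa [mulVec, dotProduct] using hA.2 i

variable [DecidableEq K]

theorem sum_erase_norm_eq (hA : IsLaplacian A) (k : K) :
    ∑ j ∈ univ.erase k, ‖A k j‖ = A k k := by
  have hrow := hA.2 k
  rw [← add_sum_erase _ _ (mem_univ k)] at hrow
  rw [sum_congr rfl fun j hj => Real.norm_of_nonpos (hA.1 k j (ne_of_mem_erase hj).symm),
    sum_neg_distrib]
  linarith

theorem det_one_add_smul_ne_zero (hA : IsLaplacian A) {c : ℝ} (hc : 0 ≤ c) :
    (1 + c • A).det ≠ 0 := by
  refine det_ne_zero_of_sum_row_lt_diag fun k => ?_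
  have hoff : ∑ j ∈ univ.erase k, ‖(1 + c • A) k j‖ = c * A k k := by
    rw [← hA.sum_erase_norm_eq, mul_sum]
    refine sum_congr rfl fun j hj => ?_
    simp [one_apply_ne' (ne_of_mem_erase hj), norm_mul, abs_of_nonneg hc]
  have hdiag : 0 ≤ A k k := hA.sum_erase_norm_eq k ▸ sum_nonneg fun _ _ => norm_nonneg _
  rw [hoff]
  simp only [Matrix.add_apply, one_apply_eq, Matrix.smul_apply, smul_eq_mul]
  rw [Real.norm_of_nonneg (by positivity)]
  linarith

theorem inv_one_add_smul_mulVec_one (hA : IsLaplacian A) {c : ℝ} (hc : 0 ≤ c) :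
    (1 + c • A)⁻¹ *ᵥ 1 = 1 := by
  have h : (1 + c • A) *ᵥ 1 = 1 := by
    rw [add_mulVec, smul_mulVec, hA.mulVec_one, smul_zero, one_mulVec, add_zero]
  conv_lhs => rw [← h]
  rw [mulVec_mulVec, nonsing_inv_mul _ (hA.det_one_add_smul_ne_zero hc).isUnit, one_mulVec]

theorem sum_vecMul_inv_one_add_smul (hA : IsLaplacian A) {c : ℝ} (hc : 0 ≤ c) (v : K → ℝ) :
    ∑ j, (v ᵥ* (1 + c • A)⁻¹) j = ∑ j, v j := by
  have h := congrArg (v ⬝ᵥ ·) (hA.inv_one_add_smul_mulVec_one hc)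
  simp only [dotProduct_mulVec, dotProduct_one] at h
  exact h

theorem re_pos_of_hasEigenvalue (hA : IsLaplacian A) {μ : ℂ}
    (hμ : Module.End.HasEigenvalue (toLin' (A.map (↑))) μ) (hμ0 : μ ≠ 0) : 0 < μ.re := by
  obtain ⟨k, hk⟩ := eigenvalue_mem_ball hμ
  simp only [map_apply, Complex.norm_real, hA.sum_erase_norm_eq, mem_closedBall_iff_norm] at hk
  exact Complex.re_pos_of_norm_sub_ofReal_le hk hμ0

theorem tendsto_exp_neg_smul_mulVec (hA : IsLaplacian A) {w : K → ℝ} (hw : w ᵥ* A = 0)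
    (hw1 : ∑ i, w i = 1) (hker : ∀ z, A *ᵥ z = 0 → ∃ c, z = fun _ => c) (x : K → ℝ) :
    Tendsto (fun t : ℝ => NormedSpace.exp (-(t • A)) *ᵥ x) atTop (𝓝 fun _ => w ⬝ᵥ x) := by
  have hwc : ((↑) ∘ w) ᵥ* A.map ((↑) : ℝ → ℂ) = 0 := by
    ext i
    exact (RingHom.map_vecMul Complex.ofRealHom A w i).symm.trans (by simp [hw])
  have hkerc (z : K → ℂ) (hz : A.map (↑) *ᵥ z = 0) : z = fun _ => ((↑) ∘ w) ⬝ᵥ z := by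
    obtain ⟨c, rfl⟩ := exists_const_of_map_ofReal_mulVec_eq_zero hker hz
    simp [dotProduct, ← sum_mul, ← Complex.ofReal_sum, hw1]
  have hlim := tendsto_exp_neg_smul_mulVec_of_re_pos
    (fun μ hμ hμ0 => hA.re_pos_of_hasEigenvalue hμ hμ0) hwc hkerc ((↑) ∘ x)
  have hre : Continuous fun z : K → ℂ => fun i => (z i).re := by fun_prop
  convert (hre.tendsto _).comp hlim using 1
  · ext t i
    have hmap : -(t • A.map ((↑) : ℝ → ℂ)) = (-(t • A)).map (↑) := by ext; simp
    simp only [Function.comp_apply, hmap, ← exp_map_ofReal]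
    exact congrArg Complex.re (RingHom.map_mulVec Complex.ofRealHom _ x i)
  · simp [dotProduct]

end IsLaplacian

section Hub

variable {n : ℕ} {L : Matrix (Fin n) (Fin n) ℝ} {v : Fin n → ℝ} {δ : ℝ}

theorem hubL0_add_hubH_eq_fromBlocks :
    hubL0 L + hubH δ v = fromBlocks (L + δ • 1) (of fun _ _ => -δ)
      (of fun _ j => -v j) (of fun _ _ => ∑ i, v i) := by
  simp only [hubL0, hubH, hubHI, hubHv, fromBlocks_smul, fromBlocks_add]
  congr 1 <;> ext <;> simp [add_comm]

theorem isLaplacian_hubL0_add_hubH (hL : IsLaplacian L) (hv : ∀ i, 0 ≤ v i) (hδ : 0 ≤ δ) :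
    IsLaplacian (hubL0 L + hubH δ v) := by
  rw [hubL0_add_hubH_eq_fromBlocks]
  constructor
  · rintro (i | i) (j | j) hij
    · have hij' : i ≠ j := fun h => hij (congrArg _ h)
      simpa [one_apply_ne hij'] using hL.1 i j hij'
    · simpa using hδ
    · simpa using hv j
    · exact absurd rfl hij
  · rintro (i | i)
    · simp [Fintype.sum_sum_type, sum_add_distrib, hL.2 i, one_apply]
    · simp [Fintype.sum_sum_type]

theorem exists_const_of_hubL0_add_hubH_mulVec_eq_zero (hL : IsLaplacian L) (hδ : 0 < δ)
    {z : Fin n ⊕ Unit → ℝ} (hz : (hubL0 L + hubH δ v) *ᵥ z = 0) : ∃ c, z = fun _ => c := by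
  refine ⟨z (Sum.inr ()), funext ?_⟩
  set c := z (Sum.inr ())
  have htop : (L + δ • 1) *ᵥ (z ∘ Sum.inl - c • 1) = 0 := by
    have h := congrArg (· ∘ Sum.inl) hz
    simp only [hubL0_add_hubH_eq_fromBlocks, fromBlocks_mulVec, Sum.elim_comp_inl] at h
    have hconst : (L + δ • 1) *ᵥ (c • 1) = (δ * c) • 1 := by
      rw [mulVec_smul, add_mulVec, hL.mulVec_one, smul_mulVec, one_mulVec, zero_add, smul_smul,
        mul_comm]
    have hcol : (of fun (_ : Fin n) (_ : Unit) => -δ) *ᵥ (z ∘ Sum.inr) = -((δ * c) • 1) := by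
      ext; simp [mulVec, dotProduct, c]
    rw [mulVec_sub, hconst, eq_neg_of_add_eq_zero_left h, hcol, neg_neg, sub_self]
  rw [← smul_one_add_inv_smul L hδ.ne', smul_mulVec, smul_eq_zero] at htop
  have hzero := eq_zero_of_mulVec_eq_zero
    (hL.det_one_add_smul_ne_zero (inv_nonneg.mpr hδ.le)) (htop.resolve_left hδ.ne')
  rintro (i | ⟨⟩)
  · simpa [sub_eq_zero] using congrFun hzero i
  · rfl

theorem vecMul_hubL0_add_hubH_eq_zero (hL : IsLaplacian L) (hδ : 0 < δ) :
    Sum.elim (v ᵥ* (1 + δ⁻¹ • L)⁻¹) (fun _ => δ) ᵥ* (hubL0 L + hubH δ v) = 0 := by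
  set u := v ᵥ* (1 + δ⁻¹ • L)⁻¹
  have hu : u ᵥ* (L + δ • 1) = δ • v := by
    rw [← smul_one_add_inv_smul L hδ.ne', vecMul_smul, vecMul_vecMul,
      nonsing_inv_mul _ (hL.det_one_add_smul_ne_zero (inv_nonneg.mpr hδ.le)).isUnit, vecMul_one]
  have hsum : ∑ j, u j = ∑ j, v j := hL.sum_vecMul_inv_one_add_smul (inv_nonneg.mpr hδ.le) v
  rw [hubL0_add_hubH_eq_fromBlocks, vecMul_fromBlocks, Sum.elim_comp_inl, Sum.elim_comp_inr, hu]
  ext (j | j)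
  · simp [vecMul, dotProduct]
  · simp [vecMul, dotProduct, ← sum_mul, hsum, mul_comm (∑ j, v j)]

end Hub

/-- Consensus in the system `ẏ = -(L₀ + H_{δ,v})y` with a hub uniformly
influencing the agents: the solution converges to the constant vector `c·1′`
with `c = (1/(s+δ))·(Σⱼ [vᵀ(I + δ⁻¹L)⁻¹]ⱼ y⁰ⱼ + δ·y⁰_{n+1})`. -/
theorem consensus_hub {n : ℕ} (L : Matrix (Fin n) (Fin n) ℝ)
    (hL : IsLaplacian L) (v : Fin n → ℝ) (hv : ∀ i, 0 ≤ v i)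
    (δ : ℝ) (hδ : 0 < δ) (y0 : (Fin n ⊕ Unit) → ℝ) :
    Tendsto
      (fun t : ℝ => (NormedSpace.exp (-(t • (hubL0 L + hubH δ v)))).mulVec y0)
      atTop
      (𝓝 (fun _ => ((∑ i, v i) + δ)⁻¹ *
        ((∑ j, (v ᵥ* (1 + δ⁻¹ • L)⁻¹) j * y0 (Sum.inl j)) +
          δ * y0 (Sum.inr ())))) := by
  have hsδ : (∑ i, v i) + δ ≠ 0 := (add_pos_of_nonneg_of_pos (sum_nonneg fun i _ => hv i) hδ).ne'
  set w : Fin n ⊕ Unit → ℝ :=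
    ((∑ i, v i) + δ)⁻¹ • Sum.elim (v ᵥ* (1 + δ⁻¹ • L)⁻¹) (fun _ => δ)
  have hw : w ᵥ* (hubL0 L + hubH δ v) = 0 := by
    rw [smul_vecMul, vecMul_hubL0_add_hubH_eq_zero hL hδ, smul_zero]
  have hw1 : ∑ i, w i = 1 := by
    simp [w, Fintype.sum_sum_type, ← mul_sum,
      hL.sum_vecMul_inv_one_add_smul (inv_nonneg.mpr hδ.le), hsδ]
  convert (isLaplacian_hubL0_add_hubH hL hv hδ.le).tendsto_exp_neg_smul_mulVec hw hw1
    (fun z hz => exists_const_of_hubL0_add_hubH_mulVec_eq_zero hL hδ hz) y0 using 3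
  simp [w, dotProduct, Fintype.sum_sum_type, mul_sum, mul_add, mul_assoc]
end

section
/- Let L be an n×n Laplacian matrix whose eigenprojection is the rank-one matrix L^⊢ = 1·wᵀ for some w ∈ ℝⁿ (so that the system ẋ = −Lx reaches asymptotic consensus ⟨w, x(0)⟩). Then for any y⁰ ∈ ℝ^{n+1}, the double limit lim_{δ→0⁺} lim_{t→∞} exp(−t(L₀ + H_{δ,δ1}))·y⁰ equals the constant vector c·1′ with c = (1/(n+1))·( n·Σ_{j=1}^n w_j y⁰_j + y⁰_{n+1} ), i.e., the asymptotic consensus of the hub system is the scalar product of y⁰ with (n+1)⁻¹·(n w₁, …, n wₙ, 1)ᵀ. -/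
open Matrix Filter Topology

/-! For `δ > 0` the hub matrix `A_δ = L₀ + H_{δ,δ1}` has zero row sums, and every left null vector
`u` of `A_δ` gives a conserved quantity `⟨u, y(t)⟩` of `ẏ = -A_δ y`; letting `t → ∞` forces
`c δ = ⟨u, y⁰⟩ / Σ u`. Left null vectors of `A_δ` are read off from those of the Schur complement
`M_δ = L + δ (I - 11ᵀ/n)` of its hub entry. For any matrix `M` with `M 1 = 0` and any `w` with
`Σ w = 1`, the vector `wᵀ adj (M + 1wᵀ)` is a left null vector of `M`; for `M = M_δ` it is
polynomial in `δ` and at `δ = 0` equals `det (L + 1wᵀ) • w`. The eigenprojection hypothesis makes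
`ker L = span 1` and `wᵀ L = 0`, hence `det (L + 1wᵀ) ≠ 0`, and continuity in `δ` gives the
limit `⟨(n w, 1), y⁰⟩ / (n + 1)`. -/

section ConstantVectors

variable {N : Type*} [Fintype N]

theorem vecMulVec_one_mulVec {l : Type*} (w x : N → ℝ) :
    vecMulVec (fun _ : l => 1) w *ᵥ x = fun _ => w ⬝ᵥ x := by
  ext
  simp [vecMulVec_mulVec]

theorem mulVec_const_eq_zero {l : Type*} {L : Matrix l N ℝ} (hL : L *ᵥ (fun _ => 1) = 0)
    (c : ℝ) : L *ᵥ (fun _ => c) = 0 := by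
  rw [show (fun _ => c) = c • fun _ : N => (1 : ℝ) by ext; simp, mulVec_smul, hL, smul_zero]

theorem vecMul_of_const {l : Type*} (v : N → ℝ) (a : ℝ) :
    v ᵥ* (of fun _ _ => a : Matrix N l ℝ) = fun _ => (∑ i, v i) * a := by
  ext
  simp [vecMul, dotProduct, Finset.sum_mul]

theorem IsLaplacian.mulVec_one_eq_zero {L : Matrix N N ℝ} (hL : IsLaplacian L) :
    L *ᵥ (fun _ => 1) = 0 := by
  ext i
  simpa [mulVec, dotProduct] using hL.2 i

end ConstantVectors

section ConservedQuantity

variable {N : Type*} [Fintype N]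

open scoped Norms.Operator in
theorem Matrix.vecMul_exp_eq_self [DecidableEq N] {u : N → ℝ} {B : Matrix N N ℝ}
    (h : u ᵥ* B = 0) : u ᵥ* NormedSpace.exp B = u := by
  have hX : SemiconjBy (of fun _ => u) B 0 := by
    ext i j
    simpa [SemiconjBy, Matrix.mul_apply, vecMul, dotProduct] using congrFun h j
  have hexp := hX.exp_right
  rw [NormedSpace.exp_zero, SemiconjBy, Matrix.one_mul] at hexp
  ext j
  have hj := congrFun (congrFun hexp j) j
  rw [Matrix.mul_apply] at hj
  exact hj

theorem dotProduct_eq_sum_mul_of_tendsto_exp_mulVec [DecidableEq N] {u y : N → ℝ}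
    {A : Matrix N N ℝ} {c : ℝ} (hu : u ᵥ* A = 0)
    (hc : Tendsto (fun t : ℝ => NormedSpace.exp (-(t • A)) *ᵥ y) atTop (𝓝 fun _ => c)) :
    u ⬝ᵥ y = (∑ i, u i) * c := by
  have hconst (t : ℝ) : u ⬝ᵥ NormedSpace.exp (-(t • A)) *ᵥ y = u ⬝ᵥ y := by
    rw [dotProduct_mulVec,
      vecMul_exp_eq_self (by rw [vecMul_neg, vecMul_smul, hu, smul_zero, neg_zero])]
  have hlim := ((continuous_const (y := u)).dotProduct continuous_id |>.tendsto _).comp hc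
  simp only [Function.comp_def, id, hconst] at hlim
  rw [tendsto_nhds_unique tendsto_const_nhds hlim]
  simp [dotProduct, Finset.sum_mul]

theorem tendsto_div_of_dotProduct_eq_sum_mul {X : Type*} [TopologicalSpace X] {s : Set X}
    {a : X} {u : X → N → ℝ} {y : N → ℝ} {c : X → ℝ} (hu : ContinuousAt u a)
    (ha : ∑ i, u a i ≠ 0) (hc : ∀ x ∈ s, u x ⬝ᵥ y = (∑ i, u x i) * c x) :
    Tendsto c (𝓝[s] a) (𝓝 (u a ⬝ᵥ y / ∑ i, u a i)) := by
  have hsum : ContinuousAt (fun x => ∑ i, u x i) a :=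
    (continuous_finsetSum _ fun i _ => continuous_apply i).continuousAt.comp hu
  have hdot : ContinuousAt (fun x => u x ⬝ᵥ y) a :=
    (continuous_id.dotProduct continuous_const).continuousAt.comp hu
  refine ((hdot.div hsum ha).tendsto.mono_left nhdsWithin_le_nhds).congr' ?_
  filter_upwards [nhdsWithin_le_nhds (hsum.eventually_ne ha), self_mem_nhdsWithin] with x hx hxs
  simp only [Pi.div_apply, hc x hxs, mul_div_cancel_left₀ _ hx]

end ConservedQuantity

section Adjugate

variable {m R : Type*} [Fintype m] [DecidableEq m] [CommRing R]

theorem Matrix.vecMul_adjugate_eq_det_smul_of_vecMul_eq_self {C : Matrix m m R} {p : m → R}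
    (h : p ᵥ* C = p) : p ᵥ* adjugate C = C.det • p := by
  calc p ᵥ* adjugate C = p ᵥ* C ᵥ* adjugate C := by rw [h]
    _ = C.det • p := by rw [vecMul_vecMul, mul_adjugate, vecMul_smul, vecMul_one]

theorem Matrix.vecMul_adjugate_add_vecMulVec_vecMul_eq_zero {A : Matrix m m R} {p : m → R}
    (hA : A *ᵥ (fun _ => 1) = 0) (hp : ∑ i, p i = 1) :
    p ᵥ* adjugate (A + vecMulVec (fun _ => 1) p) ᵥ* A = 0 := by
  set C := A + vecMulVec (fun _ => 1) p
  have hC : C *ᵥ (fun _ => 1) = fun _ => 1 := by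
    ext i
    simp [C, add_mulVec, hA, vecMulVec_mulVec, dotProduct, hp]
  have hadj : adjugate C *ᵥ (fun _ => 1) = C.det • fun _ => 1 := by
    rw [← hC, mulVec_mulVec, adjugate_mul, smul_mulVec, one_mulVec, hC]
  have hA' : A = C - vecMulVec (fun _ => 1) p := by simp [C]
  rw [hA', vecMul_sub, vecMul_vecMul, adjugate_mul, vecMul_smul, vecMul_one, vecMul_vecMulVec,
    ← dotProduct_mulVec, hadj, dotProduct_smul]
  simp [dotProduct, hp]

end Adjugate

section Eigenprojection

variable {m : Type*} [Fintype m] [DecidableEq m]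

theorem nonempty_setOf_rank_pow_succ_eq (A : Matrix m m ℝ) :
    {k : ℕ | (A ^ (k + 1)).rank = (A ^ k).rank}.Nonempty := by
  set k := Function.argmin fun k => (A ^ k).rank
  refine ⟨k, le_antisymm ?_ (Function.argmin_le (fun k => (A ^ k).rank) (k + 1))⟩
  rw [pow_succ]
  exact rank_mul_le_left _ _

theorem matIndex_pos {A : Matrix m m ℝ} {v : m → ℝ} (hv : A *ᵥ v = 0) (hv0 : v ≠ 0) :
    0 < matIndex A := by
  refine Nat.pos_of_ne_zero fun h => hv0 ?_
  have hrank : (A ^ (matIndex A + 1)).rank = (A ^ matIndex A).rank :=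
    Nat.sInf_mem (nonempty_setOf_rank_pow_succ_eq A)
  rw [h, zero_add, pow_one, pow_zero, rank_one] at hrank
  have hker : LinearMap.ker A.mulVecLin = ⊥ := by
    rw [← Submodule.finrank_eq_zero]
    have := A.mulVecLin.finrank_range_add_finrank_ker
    rw [Module.finrank_fintype_fun_eq_card] at this
    unfold rank at hrank
    omega
  exact LinearMap.ker_eq_bot'.1 hker v hv

theorem IsEigenprojection.mulVec_eq_self_of_mem_range {A Q : Matrix m m ℝ} {x : m → ℝ}
    (h : IsEigenprojection A Q) (hx : x ∈ LinearMap.range Q.mulVecLin) : Q *ᵥ x = x := by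
  obtain ⟨z, rfl⟩ := hx
  simp [mulVec_mulVec, h.1]

theorem IsEigenprojection.ker_le_range {A Q : Matrix m m ℝ} (h : IsEigenprojection A Q)
    (hA : 0 < matIndex A) : LinearMap.ker A.mulVecLin ≤ LinearMap.range Q.mulVecLin := by
  intro x hx
  obtain ⟨k, hk⟩ := Nat.exists_eq_succ_of_ne_zero hA.ne'
  rw [h.2.1, LinearMap.mem_ker, mulVecLin_apply, hk, pow_succ, ← mulVec_mulVec]
  simp_all

theorem IsEigenprojection.exists_mulVec_eq_sub_mulVec {A Q : Matrix m m ℝ}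
    (h : IsEigenprojection A Q) (x : m → ℝ) : ∃ z, A ^ matIndex A *ᵥ z = x - Q *ᵥ x := by
  have hx : x - Q *ᵥ x ∈ LinearMap.ker Q.mulVecLin := by
    simp [mulVec_sub, mulVec_mulVec, h.1]
  rw [h.2.2] at hx
  exact hx

variable [Nonempty m] {L : Matrix m m ℝ} {w : m → ℝ}

theorem matIndex_pos_of_mulVec_one_eq_zero (hL : L *ᵥ (fun _ => 1) = 0) : 0 < matIndex L :=
  matIndex_pos hL fun h => one_ne_zero (congrFun h (Classical.arbitrary m))

theorem IsEigenprojection.eq_const_of_mulVec_eq_zero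
    (hJ : IsEigenprojection L (vecMulVec (fun _ => 1) w)) (hL : L *ᵥ (fun _ => 1) = 0)
    {x : m → ℝ} (hx : L *ᵥ x = 0) : x = fun _ => w ⬝ᵥ x := by
  have := hJ.mulVec_eq_self_of_mem_range
    (hJ.ker_le_range (matIndex_pos_of_mulVec_one_eq_zero hL) hx)
  rw [vecMulVec_one_mulVec] at this
  exact this.symm

theorem IsEigenprojection.sum_eq_one
    (hJ : IsEigenprojection L (vecMulVec (fun _ => 1) w)) (hL : L *ᵥ (fun _ => 1) = 0) :
    ∑ i, w i = 1 := by
  simpa [dotProduct] using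
    (congrFun (hJ.eq_const_of_mulVec_eq_zero hL hL) (Classical.arbitrary m)).symm

theorem IsEigenprojection.vecMul_eq_zero
    (hJ : IsEigenprojection L (vecMulVec (fun _ => 1) w)) (hL : L *ᵥ (fun _ => 1) = 0) :
    w ᵥ* L = 0 := by
  refine dotProduct_eq_zero _ fun x => ?_
  obtain ⟨z, hz⟩ := hJ.exists_mulVec_eq_sub_mulVec x
  have hLx : L *ᵥ x = L ^ matIndex L *ᵥ (L *ᵥ z) := by
    rw [mulVec_mulVec, ← (Commute.self_pow L _).eq, ← mulVec_mulVec, hz, mulVec_sub,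
      vecMulVec_one_mulVec, mulVec_const_eq_zero hL, sub_zero]
  have hmem : L *ᵥ x ∈ LinearMap.ker (vecMulVec (fun _ : m => (1 : ℝ)) w).mulVecLin := by
    rw [hJ.2.2, hLx]
    exact LinearMap.mem_range_self _ _
  rw [LinearMap.mem_ker, mulVecLin_apply, vecMulVec_one_mulVec] at hmem
  rw [← dotProduct_mulVec]
  exact congrFun hmem (Classical.arbitrary m)

theorem IsEigenprojection.det_add_vecMulVec_ne_zero
    (hJ : IsEigenprojection L (vecMulVec (fun _ => 1) w)) (hL : L *ᵥ (fun _ => 1) = 0) :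
    (L + vecMulVec (fun _ => 1) w).det ≠ 0 := by
  rw [Ne, ← exists_mulVec_eq_zero_iff]
  rintro ⟨x, hx0, hx⟩
  rw [add_mulVec, vecMulVec_one_mulVec] at hx
  have hwx : w ⬝ᵥ x = 0 := by
    have := congrArg (w ⬝ᵥ ·) hx
    simp only [dotProduct_add, dotProduct_mulVec, hJ.vecMul_eq_zero hL, zero_dotProduct,
      zero_add, dotProduct_zero] at this
    simpa [dotProduct, ← Finset.sum_mul, hJ.sum_eq_one hL] using this
  have hLx : L *ᵥ x = 0 := by simpa [hwx, ← Pi.zero_def] using hx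
  exact hx0 (by rw [hJ.eq_const_of_mulVec_eq_zero hL hLx, hwx]; rfl)

end Eigenprojection

section Hub

variable {n : ℕ}

theorem hubL0_add_hubH (L : Matrix (Fin n) (Fin n) ℝ) (δ : ℝ) :
    hubL0 L + hubH δ (fun _ => δ) =
      fromBlocks (L + δ • 1) (of fun _ _ => -δ) (of fun _ _ => -δ) (of fun _ _ => n * δ) := by
  simp only [hubL0, hubH, hubHI, hubHv, fromBlocks_smul, fromBlocks_add]
  congr 1 <;> ext <;> simp

theorem one_vecMul_hubL0_add_hubH_of_fin_zero (L : Matrix (Fin 0) (Fin 0) ℝ) (δ : ℝ) :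
    (fun _ => (1 : ℝ)) ᵥ* (hubL0 L + hubH δ fun _ => δ) = 0 := by
  rw [hubL0_add_hubH]
  ext (j | _)
  · exact j.elim0
  · simp [vecMul, dotProduct]

/-- The Schur complement of the hub entry `n δ` of `L₀ + H_{δ,δ1}`. -/
noncomputable def hubSchurComplement (L : Matrix (Fin n) (Fin n) ℝ) (δ : ℝ) :
    Matrix (Fin n) (Fin n) ℝ :=
  L + δ • (1 - (n : ℝ)⁻¹ • vecMulVec (fun _ => 1) (fun _ => 1))

theorem hubSchurComplement_zero (L : Matrix (Fin n) (Fin n) ℝ) :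
    hubSchurComplement L 0 = L := by
  simp [hubSchurComplement]

theorem hubSchurComplement_mulVec_one {L : Matrix (Fin n) (Fin n) ℝ} (hn : n ≠ 0)
    (hL : L *ᵥ (fun _ => 1) = 0) (δ : ℝ) : hubSchurComplement L δ *ᵥ (fun _ => 1) = 0 := by
  rw [hubSchurComplement, add_mulVec, hL, smul_mulVec, sub_mulVec, one_mulVec, smul_mulVec,
    vecMulVec_one_mulVec]
  ext i
  simp [dotProduct, hn]

theorem vecMul_hubL0_add_hubH_eq_zero_s10 {L : Matrix (Fin n) (Fin n) ℝ} {δ : ℝ} {g : Fin n → ℝ}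
    (hn : n ≠ 0) (hg : g ᵥ* hubSchurComplement L δ = 0) :
    Sum.elim ((n : ℝ) • g) (fun _ => ∑ i, g i) ᵥ* (hubL0 L + hubH δ fun _ => δ) = 0 := by
  have hrow : g ᵥ* (L + δ • 1) = fun _ => δ / n * ∑ i, g i := by
    have hS : hubSchurComplement L δ =
        L + δ • 1 - (δ / n) • vecMulVec (fun _ => 1) (fun _ => 1) := by
      simp only [hubSchurComplement, smul_sub, smul_smul, div_eq_mul_inv]
      abel
    rw [hS, vecMul_sub, vecMul_smul, vecMul_vecMulVec, sub_eq_zero] at hg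
    rw [hg]
    ext
    simp [dotProduct]
  rw [hubL0_add_hubH, vecMul_fromBlocks, Sum.elim_comp_inl, Sum.elim_comp_inr, smul_vecMul, hrow,
    vecMul_of_const, vecMul_of_const, vecMul_of_const]
  ext (j | _) <;>
    simp only [Sum.elim_inl, Sum.elim_inr, Pi.add_apply, Pi.smul_apply, Pi.zero_apply,
      smul_eq_mul, Fintype.sum_unique, ← Finset.mul_sum] <;>
    field_simp <;> ring

noncomputable def hubLeftNullVector (L : Matrix (Fin n) (Fin n) ℝ) (w : Fin n → ℝ) (δ : ℝ) :
    Fin n ⊕ Unit → ℝ :=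
  let g := w ᵥ* adjugate (hubSchurComplement L δ + vecMulVec (fun _ => 1) w)
  Sum.elim ((n : ℝ) • g) fun _ => ∑ i, g i

theorem hubLeftNullVector_vecMul_eq_zero {L : Matrix (Fin n) (Fin n) ℝ} {w : Fin n → ℝ}
    (hn : n ≠ 0) (hL : L *ᵥ (fun _ => 1) = 0) (hw : ∑ i, w i = 1) (δ : ℝ) :
    hubLeftNullVector L w δ ᵥ* (hubL0 L + hubH δ fun _ => δ) = 0 :=
  vecMul_hubL0_add_hubH_eq_zero_s10 hn
    (vecMul_adjugate_add_vecMulVec_vecMul_eq_zero (hubSchurComplement_mulVec_one hn hL δ) hw)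

theorem continuous_hubLeftNullVector (L : Matrix (Fin n) (Fin n) ℝ) (w : Fin n → ℝ) :
    Continuous (hubLeftNullVector L w) := by
  refine continuous_pi fun i => ?_
  rcases i with i | _ <;>
    simp only [hubLeftNullVector, hubSchurComplement, Sum.elim_inl, Sum.elim_inr] <;> fun_prop

theorem hubLeftNullVector_zero {L : Matrix (Fin n) (Fin n) ℝ} {w : Fin n → ℝ}
    (hwL : w ᵥ* L = 0) (hw : ∑ i, w i = 1) :
    hubLeftNullVector L w 0 =
      (L + vecMulVec (fun _ => 1) w).det • Sum.elim ((n : ℝ) • w) fun _ => 1 := by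
  have hg : w ᵥ* adjugate (L + vecMulVec (fun _ => 1) w) =
      (L + vecMulVec (fun _ => 1) w).det • w := by
    refine vecMul_adjugate_eq_det_smul_of_vecMul_eq_self ?_
    rw [vecMul_add, hwL, vecMul_vecMulVec, zero_add]
    simp [dotProduct, hw]
  ext (i | _) <;> simp [hubLeftNullVector, hubSchurComplement_zero, hg, ← Finset.mul_sum, hw,
    mul_left_comm]

theorem dotProduct_hubLeftNullVector_zero {L : Matrix (Fin n) (Fin n) ℝ} {w : Fin n → ℝ}
    (hwL : w ᵥ* L = 0) (hw : ∑ i, w i = 1) (y : Fin n ⊕ Unit → ℝ) :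
    hubLeftNullVector L w 0 ⬝ᵥ y = (L + vecMulVec (fun _ => 1) w).det *
      (n * ∑ j, w j * y (Sum.inl j) + y (Sum.inr ())) := by
  simp [hubLeftNullVector_zero hwL hw, dotProduct, Fintype.sum_sum_type, Finset.mul_sum, mul_add,
    mul_assoc, mul_left_comm]

theorem sum_hubLeftNullVector_zero {L : Matrix (Fin n) (Fin n) ℝ} {w : Fin n → ℝ}
    (hwL : w ᵥ* L = 0) (hw : ∑ i, w i = 1) :
    ∑ i, hubLeftNullVector L w 0 i = (L + vecMulVec (fun _ => 1) w).det * (n + 1) := by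
  simpa [dotProduct, hw] using dotProduct_hubLeftNullVector_zero hwL hw fun _ => 1

end Hub

/-- If the system `ẋ = -Lx` reaches asymptotic consensus `⟨w, x(0)⟩`, i.e. the
eigenprojection of `L` is `1·wᵀ`, then the double limit (first `t → ∞`, then
`δ → 0⁺`) of the symmetric-hub system equals the constant vector `c·1′` with
`c = (1/(n+1))·(n·Σⱼ wⱼ y⁰ⱼ + y⁰_{n+1})`. -/
theorem latent_consensus_symmetric_hub_of_consensus {n : ℕ}
    (L : Matrix (Fin n) (Fin n) ℝ) (hL : IsLaplacian L) (w : Fin n → ℝ)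
    (hJ : IsEigenprojection L (Matrix.vecMulVec (fun _ => (1 : ℝ)) w))
    (y0 : (Fin n ⊕ Unit) → ℝ) (c : ℝ → ℝ)
    (hc : ∀ δ : ℝ, 0 < δ →
      Tendsto
        (fun t : ℝ =>
          (NormedSpace.exp (-(t • (hubL0 L + hubH δ (fun _ => δ))))).mulVec y0)
        atTop (𝓝 (fun _ => c δ))) :
    Tendsto c (𝓝[>] 0)
      (𝓝 (((n : ℝ) + 1)⁻¹ *
        ((n : ℝ) * (∑ j, w j * y0 (Sum.inl j)) + y0 (Sum.inr ())))) := by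
  rcases Nat.eq_zero_or_pos n with rfl | hn
  · convert tendsto_div_of_dotProduct_eq_sum_mul (s := Set.Ioi 0) (a := 0)
      (u := fun _ _ => (1 : ℝ)) continuousAt_const (by simp) fun δ hδ =>
        dotProduct_eq_sum_mul_of_tendsto_exp_mulVec (one_vecMul_hubL0_add_hubH_of_fin_zero L δ)
          (hc δ hδ) using 2
    simp [dotProduct]
  have : Nonempty (Fin n) := ⟨⟨0, hn⟩⟩
  have hL1 := hL.mulVec_one_eq_zero
  have hw := hJ.sum_eq_one hL1
  have hwL := hJ.vecMul_eq_zero hL1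
  have hdet := hJ.det_add_vecMulVec_ne_zero hL1
  have hsum : ∑ i, hubLeftNullVector L w 0 i ≠ 0 := by
    rw [sum_hubLeftNullVector_zero hwL hw]
    exact mul_ne_zero hdet (by positivity)
  have hlim := tendsto_div_of_dotProduct_eq_sum_mul (s := Set.Ioi 0)
    (continuous_hubLeftNullVector L w).continuousAt hsum fun δ hδ =>
      dotProduct_eq_sum_mul_of_tendsto_exp_mulVec
        (hubLeftNullVector_vecMul_eq_zero hn.ne' hL1 hw δ) (hc δ hδ)
  rwa [dotProduct_hubLeftNullVector_zero hwL hw, sum_hubLeftNullVector_zero hwL hw,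
    mul_div_mul_left _ _ hdet, div_eq_inv_mul] at hlim
end
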